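/- arXiv:2008.00602 — 7 statements merged into one kernel-verified Lean document; each statement's English description precedes it below -/
import Mathlib

section
/- The bias of the SDIM estimator for τ_ATT is zero if and only if the finite population covariance between the treatment probabilities π_i and the untreated potential outcomes Y_i(0) is zero, i.e. E[τ̂] = τ_ATT ⟺ Σ_i (π_i − N₁/N)(Y_i(0) − Ȳ(0)) = 0. -/
open MeasureTheory Finset

/-- The SDIM is unbiased for τ_ATT iff the finite-population covariance
between treatment probabilities and untreated potential outcomes is zero. -/
theorem sdim_unbiased_iff_cov_zero {Ω : Type*} [MeasurableSpace Ω] (μ : Measure Ω)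
    [IsProbabilityMeasure μ]
    (N N1 N0 : ℕ) (hN1 : 0 < N1) (hN0 : 0 < N0) (hN : N1 + N0 = N)
    (Y0 Y1 π : Fin N → ℝ) (D : Fin N → Ω → ℝ)
    (hD01 : ∀ i ω, D i ω = 0 ∨ D i ω = 1)
    (hint : ∀ i, Integrable (D i) μ)
    (hE : ∀ i, ∫ ω, D i ω ∂μ = π i)
    (hsum : ∀ᵐ ω ∂μ, ∑ i, D i ω = (N1 : ℝ)) :
    ((∫ ω, ((1 / (N1 : ℝ)) * ∑ i, D i ω * (D i ω * Y1 i + (1 - D i ω) * Y0 i)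
        - (1 / (N0 : ℝ)) * ∑ i, (1 - D i ω) * (D i ω * Y1 i + (1 - D i ω) * Y0 i)) ∂μ)
      = (1 / (N1 : ℝ)) * ∑ i, π i * (Y1 i - Y0 i))
    ↔ ∑ i, (π i - (N1 : ℝ) / (N : ℝ)) * (Y0 i - (1 / (N : ℝ)) * ∑ j, Y0 j) = 0 := by
  have hN1' : (0:ℝ) < (N1:ℝ) := by exact_mod_cast hN1
  have hN0' : (0:ℝ) < (N0:ℝ) := by exact_mod_cast hN0
  have hNpos : (0:ℝ) < (N:ℝ) := by
    have : 0 < N := by omega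
    exact_mod_cast this
  have hNcast : (N:ℝ) = (N1:ℝ) + (N0:ℝ) := by exact_mod_cast hN.symm
  -- sum of π = N1
  set A := ∑ i, π i * Y0 i with hA
  set S := ∑ i, Y0 i with hS
  set P1 := ∑ i, π i * Y1 i with hP1
  have hπsum : ∑ i, π i = (N1:ℝ) := by
    have h1 : ∫ ω, (∑ i, D i ω) ∂μ = ∑ i, π i := by
      rw [integral_finset_sum _ (fun i _ => hint i)]
      exact Finset.sum_congr rfl (fun i _ => hE i)
    have h2 : ∫ ω, (∑ i, D i ω) ∂μ = (N1:ℝ) := by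
      rw [integral_congr_ae hsum]
      simp
    rw [← h1, h2]
  -- pointwise rewriting of integrand
  have hfun : (fun ω => (1 / (N1 : ℝ)) * ∑ i, D i ω * (D i ω * Y1 i + (1 - D i ω) * Y0 i)
        - (1 / (N0 : ℝ)) * ∑ i, (1 - D i ω) * (D i ω * Y1 i + (1 - D i ω) * Y0 i))
      = fun ω => ∑ i, ((1/(N1:ℝ)) * (D i ω * Y1 i) - (1/(N0:ℝ)) * ((1 - D i ω) * Y0 i)) := by
    funext ω
    have h1 : ∀ i, D i ω * (D i ω * Y1 i + (1 - D i ω) * Y0 i) = D i ω * Y1 i := by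
      intro i; rcases hD01 i ω with h | h <;> rw [h] <;> ring
    have h2 : ∀ i, (1 - D i ω) * (D i ω * Y1 i + (1 - D i ω) * Y0 i) = (1 - D i ω) * Y0 i := by
      intro i; rcases hD01 i ω with h | h <;> rw [h] <;> ring
    simp_rw [h1, h2]
    rw [Finset.mul_sum, Finset.mul_sum, ← Finset.sum_sub_distrib]
  have hint1 : ∀ i : Fin N, Integrable (fun ω => (1/(N1:ℝ)) * (D i ω * Y1 i)
      - (1/(N0:ℝ)) * ((1 - D i ω) * Y0 i)) μ := fun i =>
    (((hint i).mul_const _).const_mul _).sub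
      ((((integrable_const 1).sub (hint i)).mul_const _).const_mul _)
  have hval : ∀ i : Fin N, (∫ ω, ((1/(N1:ℝ)) * (D i ω * Y1 i)
      - (1/(N0:ℝ)) * ((1 - D i ω) * Y0 i)) ∂μ)
      = (1/(N1:ℝ)) * (π i * Y1 i) - (1/(N0:ℝ)) * ((1 - π i) * Y0 i) := by
    intro i
    have i1 : Integrable (fun ω => (1/(N1:ℝ)) * (D i ω * Y1 i)) μ := by
      exact ((hint i).mul_const _).const_mul _
    have i2 : Integrable (fun ω => (1/(N0:ℝ)) * ((1 - D i ω) * Y0 i)) μ := by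
      have h : Integrable (fun ω => (1:ℝ) - D i ω) μ := (integrable_const 1).sub (hint i)
      exact (h.mul_const _).const_mul _
    rw [integral_sub i1 i2, integral_const_mul, integral_const_mul, integral_mul_const,
      integral_mul_const, hE i]
    have h2 : ∫ ω, (1 - D i ω) ∂μ = 1 - π i := by
      have := integral_sub (μ := μ) (f := fun _ => (1:ℝ)) (g := D i) (integrable_const 1) (hint i)
      rw [this, hE i, integral_const]; simp
    rw [h2]
  have hInt : (∫ ω, ((1 / (N1 : ℝ)) * ∑ i, D i ω * (D i ω * Y1 i + (1 - D i ω) * Y0 i)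
        - (1 / (N0 : ℝ)) * ∑ i, (1 - D i ω) * (D i ω * Y1 i + (1 - D i ω) * Y0 i)) ∂μ)
      = (1/(N1:ℝ)) * P1 - (1/(N0:ℝ)) * (S - A) := by
    rw [hfun, integral_finset_sum _ (fun i _ => hint1 i)]
    simp_rw [hval]
    rw [Finset.sum_sub_distrib, ← Finset.mul_sum, ← Finset.mul_sum]
    congr 1
    rw [hS, hA, ← Finset.sum_sub_distrib]
    congr 1
    apply Finset.sum_congr rfl
    intro i _
    ring
  -- simplify covariance sum
  have hcov : ∑ i, (π i - (N1 : ℝ) / (N : ℝ)) * (Y0 i - (1 / (N : ℝ)) * ∑ j, Y0 j)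
      = A - (N1:ℝ) * S / (N:ℝ) := by
    have : ∀ i : Fin N, (π i - (N1 : ℝ) / (N : ℝ)) * (Y0 i - (1 / (N : ℝ)) * S)
        = π i * Y0 i - (1/(N:ℝ)) * S * π i - ((N1:ℝ)/(N:ℝ)) * Y0 i
          + ((N1:ℝ)/(N:ℝ)) * ((1/(N:ℝ)) * S) := by
      intro i; ring
    simp_rw [← hS, this]
    rw [Finset.sum_add_distrib, Finset.sum_sub_distrib, Finset.sum_sub_distrib,
      ← Finset.mul_sum, ← Finset.mul_sum, hπsum, ← hA, Finset.sum_const, Finset.card_fin,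
      nsmul_eq_mul]
    field_simp
    ring
  have hτ : ∑ i, π i * (Y1 i - Y0 i) = P1 - A := by
    rw [hP1, hA, ← Finset.sum_sub_distrib]
    exact Finset.sum_congr rfl (fun i _ => by ring)
  rw [hInt, hτ, hcov]
  have e1 : (1/(N1:ℝ))*P1 - (1/(N0:ℝ))*(S-A) - (1/(N1:ℝ))*(P1-A)
      = ((N:ℝ)*A - (N1:ℝ)*S)/((N1:ℝ)*(N0:ℝ)) := by
    rw [hNcast]; field_simp; ring
  have e2 : A - (N1:ℝ)*S/(N:ℝ) = ((N:ℝ)*A - (N1:ℝ)*S)/(N:ℝ) := by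
    field_simp
  constructor
  · intro h
    have h0 : (N:ℝ)*A - (N1:ℝ)*S = 0 := by
      have h1 := sub_eq_zero.mpr h
      rw [e1] at h1
      rcases div_eq_zero_iff.mp h1 with h2 | h2
      · exact h2
      · exact absurd h2 (by positivity)
    rw [e2, h0, zero_div]
  · intro h
    have h0 : (N:ℝ)*A - (N1:ℝ)*S = 0 := by
      rw [e2] at h
      rcases div_eq_zero_iff.mp h with h2 | h2
      · exact h2
      · exact absurd h2 (ne_of_gt hNpos)
    apply sub_eq_zero.mp
    rw [e1, h0, zero_div]
end

section
/- Given nonnegative weights w_i with Σ_i w_i > 0, define the weighted mean E_w[X] = (Σ_i w_i X_i)/(Σ_i w_i) and weighted variance V_w[X] = E_w[(X − E_w[X])²]. Then for Ỹ_i = (1/N₁)Y_i(1) + (1/N₀)Y_i(0), the identity V_w[Ỹ] = (N/(N₁N₀))·[(1/N₁)V_w[Y(1)] + (1/N₀)V_w[Y(0)] − (1/N)V_w[τ]] holds, where τ_i = Y_i(1) − Y_i(0) and N = N₁ + N₀. -/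
/-!
Centring is linear: if `u`, `v` are the centred values of `X`, `Y`, those of `a X + b Y` and
`X - Y` are `a u + b v` and `u - v`. The pointwise identity
`(a u + b v)² = (a + b) (a u² + b v²) - a b (u - v)²` then survives weighted averaging.
With `a = 1/N₁`, `b = 1/N₀` one has `a + b = N/(N₁N₀)` and `a b = (a + b)/N`.
-/

open Finset

section WeightedMoments

variable {ι : Type*} [Fintype ι] (w : ι → ℝ)

noncomputable def wmean (X : ι → ℝ) : ℝ :=
  (∑ i, w i * X i) / ∑ i, w i

noncomputable def wvar (X : ι → ℝ) : ℝ :=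
  wmean w fun i => (X i - wmean w X) ^ 2

theorem wmean_linear_comb (a b : ℝ) (X Y : ι → ℝ) :
    wmean w (fun i => a * X i + b * Y i) = a * wmean w X + b * wmean w Y := by
  simp only [wmean, mul_add, sum_add_distrib, mul_left_comm _ a, mul_left_comm _ b, ← mul_sum]
  ring

theorem wmean_sub (X Y : ι → ℝ) :
    wmean w (fun i => X i - Y i) = wmean w X - wmean w Y := by
  simpa [← sub_eq_add_neg] using wmean_linear_comb w 1 (-1) X Y

theorem wvar_linear_comb (a b : ℝ) (X Y : ι → ℝ) :
    wvar w (fun i => a * X i + b * Y i)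
      = (a + b) * (a * wvar w X + b * wvar w Y) - a * b * wvar w (fun i => X i - Y i) := by
  simp only [wvar, wmean_linear_comb, wmean_sub]
  set mX := wmean w X
  set mY := wmean w Y
  rw [eq_sub_iff_add_eq]
  calc _ = wmean w (fun i => 1 * (a * X i + b * Y i - (a * mX + b * mY)) ^ 2
              + a * b * (X i - Y i - (mX - mY)) ^ 2) := by
          rw [wmean_linear_comb, one_mul]
    _ = wmean w (fun i => (a + b) * a * (X i - mX) ^ 2 + (a + b) * b * (Y i - mY) ^ 2) := by
          congr 1
          funext i
          ring
    _ = _ := by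
          rw [wmean_linear_comb]
          ring

end WeightedMoments

theorem weighted_variance_decomposition_general (N1 N0 : ℕ) (hN1 : 0 < N1) (hN0 : 0 < N0)
    (Y0 Y1 w : Fin (N1 + N0) → ℝ) :
    let Ew : (Fin (N1 + N0) → ℝ) → ℝ := fun X => (∑ i, w i * X i) / (∑ i, w i)
    let Vw : (Fin (N1 + N0) → ℝ) → ℝ := fun X => Ew (fun i => (X i - Ew X) ^ 2)
    Vw (fun i => (1 / (N1 : ℝ)) * Y1 i + (1 / (N0 : ℝ)) * Y0 i)
      = (((N1 + N0 : ℕ) : ℝ) / ((N1 : ℝ) * (N0 : ℝ)))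
        * ((1 / (N1 : ℝ)) * Vw Y1 + (1 / (N0 : ℝ)) * Vw Y0
           - (1 / ((N1 + N0 : ℕ) : ℝ)) * Vw (fun i => Y1 i - Y0 i)) := by
  intro Ew Vw
  change wvar w _ = _ * (_ * wvar w Y1 + _ * wvar w Y0 - _ * wvar w _)
  rw [wvar_linear_comb]
  have hN1' : (N1 : ℝ) ≠ 0 := by positivity
  have hN0' : (N0 : ℝ) ≠ 0 := by positivity
  have hN : ((N1 + N0 : ℕ) : ℝ) ≠ 0 := by positivity
  field_simp
  push_cast
  ring

/-- Weighted-variance decomposition of Ỹ_i = Y_i(1)/N₁ + Y_i(0)/N₀. -/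
theorem weighted_variance_decomposition (N1 N0 : ℕ) (hN1 : 0 < N1) (hN0 : 0 < N0)
    (Y0 Y1 w : Fin (N1 + N0) → ℝ) (hw : ∀ i, 0 ≤ w i) (hwsum : 0 < ∑ i, w i) :
    let Ew : (Fin (N1 + N0) → ℝ) → ℝ := fun X => (∑ i, w i * X i) / (∑ i, w i)
    let Vw : (Fin (N1 + N0) → ℝ) → ℝ := fun X => Ew (fun i => (X i - Ew X) ^ 2)
    Vw (fun i => (1 / (N1 : ℝ)) * Y1 i + (1 / (N0 : ℝ)) * Y0 i)
      = (((N1 + N0 : ℕ) : ℝ) / ((N1 : ℝ) * (N0 : ℝ)))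
        * ((1 / (N1 : ℝ)) * Vw Y1 + (1 / (N0 : ℝ)) * Vw Y0
           - (1 / ((N1 + N0 : ℕ) : ℝ)) * Vw (fun i => Y1 i - Y0 i)) :=
  weighted_variance_decomposition_general N1 N0 hN1 hN0 Y0 Y1 w
end

section
/- Let Ẏ_i(1) = Y_i(1) − E_π[Y(1)] and Ẏ_i(0) = Y_i(0) − E_{1−π}[Y(0)]. Then Σ_i π_i(1−π_i)((1/N₁)Ẏ_i(1) + (1/N₀)Ẏ_i(0))² = (1/N₁)V_π[Y(1)] + (1/N₀)V_{1−π}[Y(0)] − (1/N²)Σ_i ( (π_i/(N₁/N))Ẏ_i(1) − ((1−π_i)/(N₀/N))Ẏ_i(0) )², where Σ_i π_i = N₁ and Σ_i (1−π_i) = N₀ and V_w denotes the w-weighted variance. -/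
open Finset

/-- Algebraic identity for the π(1-π)-weighted sum of squared combinations
of centered potential outcomes. -/
theorem variance_bound_identity (N N1 N0 : ℕ) (hN1 : 0 < N1) (hN0 : 0 < N0)
    (hN : N1 + N0 = N)
    (Y0 Y1 π : Fin N → ℝ) (hπ : ∀ i, 0 ≤ π i ∧ π i ≤ 1)
    (hπsum : ∑ i, π i = (N1 : ℝ)) :
    let Eπ1 : ℝ := (∑ i, π i * Y1 i) / (N1 : ℝ)
    let Eπ0 : ℝ := (∑ i, (1 - π i) * Y0 i) / (N0 : ℝ)
    ∑ i, π i * (1 - π i)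
        * ((1 / (N1 : ℝ)) * (Y1 i - Eπ1) + (1 / (N0 : ℝ)) * (Y0 i - Eπ0)) ^ 2
      = (1 / (N1 : ℝ)) * ((∑ i, π i * (Y1 i - Eπ1) ^ 2) / (N1 : ℝ))
        + (1 / (N0 : ℝ)) * ((∑ i, (1 - π i) * (Y0 i - Eπ0) ^ 2) / (N0 : ℝ))
        - (1 / (N : ℝ) ^ 2) * ∑ i,
            (π i / ((N1 : ℝ) / (N : ℝ)) * (Y1 i - Eπ1)
              - (1 - π i) / ((N0 : ℝ) / (N : ℝ)) * (Y0 i - Eπ0)) ^ 2 := by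
  intro Eπ1 Eπ0
  have hN1' : (N1 : ℝ) ≠ 0 := Nat.cast_ne_zero.mpr hN1.ne'
  have hN0' : (N0 : ℝ) ≠ 0 := Nat.cast_ne_zero.mpr hN0.ne'
  have hNpos : 0 < N := by omega
  have hN' : (N : ℝ) ≠ 0 := Nat.cast_ne_zero.mpr hNpos.ne'
  have key : ∀ i : Fin N,
      π i * (1 - π i)
        * ((1 / (N1 : ℝ)) * (Y1 i - Eπ1) + (1 / (N0 : ℝ)) * (Y0 i - Eπ0)) ^ 2
      = (1 / (N1 : ℝ)) * (π i * (Y1 i - Eπ1) ^ 2 / (N1 : ℝ))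
        + (1 / (N0 : ℝ)) * ((1 - π i) * (Y0 i - Eπ0) ^ 2 / (N0 : ℝ))
        - (1 / (N : ℝ) ^ 2) *
            (π i / ((N1 : ℝ) / (N : ℝ)) * (Y1 i - Eπ1)
              - (1 - π i) / ((N0 : ℝ) / (N : ℝ)) * (Y0 i - Eπ0)) ^ 2 := by
    intro i
    field_simp
    ring
  calc ∑ i, π i * (1 - π i)
        * ((1 / (N1 : ℝ)) * (Y1 i - Eπ1) + (1 / (N0 : ℝ)) * (Y0 i - Eπ0)) ^ 2
      = ∑ i, ((1 / (N1 : ℝ)) * (π i * (Y1 i - Eπ1) ^ 2 / (N1 : ℝ))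
        + (1 / (N0 : ℝ)) * ((1 - π i) * (Y0 i - Eπ0) ^ 2 / (N0 : ℝ))
        - (1 / (N : ℝ) ^ 2) *
            (π i / ((N1 : ℝ) / (N : ℝ)) * (Y1 i - Eπ1)
              - (1 - π i) / ((N0 : ℝ) / (N : ℝ)) * (Y0 i - Eπ0)) ^ 2) :=
        Finset.sum_congr rfl fun i _ => key i
    _ = _ := by
        rw [Finset.sum_sub_distrib, Finset.sum_add_distrib, ← Finset.mul_sum,
          ← Finset.mul_sum, ← Finset.mul_sum, ← Finset.sum_div, ← Finset.sum_div]
end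

section
/- Under the assumptions Σ_i π_i = N₁, 0 < N₁ < N, the quantity Σ_i π_i(1−π_i)·(Ỹ_i − E_π̃[Ỹ])², where Ỹ_i = (1/N₁)Y_i(1) + (1/N₀)Y_i(0) and π̃_i = π_i(1−π_i), is bounded above by (1/N₁)V_π[Y(1)] + (1/N₀)V_{1−π}[Y(0)]. (This is the variance bound for the SDIM estimator.) -/
open Finset

lemma mean_min_aux {n : ℕ} (w x : Fin n → ℝ)
    (hS : 0 < ∑ i, w i) (c : ℝ) :
    ∑ i, w i * (x i - (∑ j, w j * x j) / (∑ j, w j)) ^ 2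
      ≤ ∑ i, w i * (x i - c) ^ 2 := by
  set S := ∑ j, w j with hSdef
  set M := ∑ j, w j * x j with hMdef
  have expand : ∀ d : ℝ, ∑ i, w i * (x i - d) ^ 2
      = (∑ i, w i * x i ^ 2) - 2 * d * M + d ^ 2 * S := by
    intro d
    have h : ∀ i ∈ Finset.univ, w i * (x i - d) ^ 2
        = w i * x i ^ 2 - 2 * d * (w i * x i) + d ^ 2 * w i := by
      intro i _; ring
    rw [Finset.sum_congr rfl h, Finset.sum_add_distrib, Finset.sum_sub_distrib,
      ← Finset.mul_sum, ← Finset.mul_sum, hSdef, hMdef]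
  rw [expand, expand]
  have h1 : (∑ i, w i * x i ^ 2) - 2 * (M / S) * M + (M / S) ^ 2 * S
      = (∑ i, w i * x i ^ 2) - M ^ 2 / S := by
    field_simp
    ring
  have h2 : M ^ 2 / S - 2 * c * M + c ^ 2 * S = (M - c * S) ^ 2 / S := by
    field_simp
    ring
  have h3 : 0 ≤ (M - c * S) ^ 2 / S := div_nonneg (sq_nonneg _) hS.le
  linarith

/-- Variance bound: the π̃-weighted sum of squared deviations of Ỹ about
its π̃-weighted mean is bounded by (1/N₁)V_π[Y(1)] + (1/N₀)V_{1-π}[Y(0)]. -/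
theorem sdim_variance_bound (N N1 N0 : ℕ) (hN1 : 0 < N1) (hN0 : 0 < N0)
    (hN : N1 + N0 = N)
    (Y0 Y1 π : Fin N → ℝ) (hπ : ∀ i, 0 ≤ π i ∧ π i ≤ 1)
    (hπsum : ∑ i, π i = (N1 : ℝ)) (hπt : 0 < ∑ i, π i * (1 - π i)) :
    let Yt : Fin N → ℝ := fun i => (1 / (N1 : ℝ)) * Y1 i + (1 / (N0 : ℝ)) * Y0 i
    let Et : ℝ := (∑ i, π i * (1 - π i) * Yt i) / (∑ i, π i * (1 - π i))
    let Eπ1 : ℝ := (∑ i, π i * Y1 i) / (N1 : ℝ)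
    let Eπ0 : ℝ := (∑ i, (1 - π i) * Y0 i) / (N0 : ℝ)
    ∑ i, π i * (1 - π i) * (Yt i - Et) ^ 2
      ≤ (1 / (N1 : ℝ)) * ((∑ i, π i * (Y1 i - Eπ1) ^ 2) / (N1 : ℝ))
        + (1 / (N0 : ℝ)) * ((∑ i, (1 - π i) * (Y0 i - Eπ0) ^ 2) / (N0 : ℝ)) := by
  intro Yt Et Eπ1 Eπ0
  have hN1' : (0 : ℝ) < (N1 : ℝ) := by exact_mod_cast hN1
  have hN0' : (0 : ℝ) < (N0 : ℝ) := by exact_mod_cast hN0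
  set c : ℝ := (1 / (N1 : ℝ)) * Eπ1 + (1 / (N0 : ℝ)) * Eπ0 with hc
  have key1 : ∑ i, π i * (1 - π i) * (Yt i - Et) ^ 2
      ≤ ∑ i, π i * (1 - π i) * (Yt i - c) ^ 2 := by
    have := mean_min_aux (fun i => π i * (1 - π i)) Yt hπt c
    simpa [Et] using this
  have key2 : ∑ i, π i * (1 - π i) * (Yt i - c) ^ 2
      ≤ ∑ i, (π i * ((Y1 i - Eπ1) / (N1 : ℝ)) ^ 2
          + (1 - π i) * ((Y0 i - Eπ0) / (N0 : ℝ)) ^ 2) := by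
    apply Finset.sum_le_sum
    intro i _
    obtain ⟨h0, h1⟩ := hπ i
    have hYc : Yt i - c = (Y1 i - Eπ1) / (N1 : ℝ) + (Y0 i - Eπ0) / (N0 : ℝ) := by
      simp only [Yt, hc]
      field_simp
      ring
    rw [hYc]
    set p := (Y1 i - Eπ1) / (N1 : ℝ)
    set q := (Y0 i - Eπ0) / (N0 : ℝ)
    nlinarith [sq_nonneg (π i * p - (1 - π i) * q)]
  have key3 : ∑ i, (π i * ((Y1 i - Eπ1) / (N1 : ℝ)) ^ 2
          + (1 - π i) * ((Y0 i - Eπ0) / (N0 : ℝ)) ^ 2)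
      = (1 / (N1 : ℝ)) * ((∑ i, π i * (Y1 i - Eπ1) ^ 2) / (N1 : ℝ))
        + (1 / (N0 : ℝ)) * ((∑ i, (1 - π i) * (Y0 i - Eπ0) ^ 2) / (N0 : ℝ)) := by
    rw [Finset.sum_add_distrib]
    congr 1
    · have h : ∀ i ∈ Finset.univ, π i * ((Y1 i - Eπ1) / (N1 : ℝ)) ^ 2
          = (π i * (Y1 i - Eπ1) ^ 2) * (1 / (N1 : ℝ) * (1 / (N1 : ℝ))) := by
        intro i _; ring
      rw [Finset.sum_congr rfl h, ← Finset.sum_mul]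
      ring
    · have h : ∀ i ∈ Finset.univ, (1 - π i) * ((Y0 i - Eπ0) / (N0 : ℝ)) ^ 2
          = ((1 - π i) * (Y0 i - Eπ0) ^ 2) * (1 / (N0 : ℝ) * (1 / (N0 : ℝ))) := by
        intro i _; ring
      rw [Finset.sum_congr rfl h, ← Finset.sum_mul]
      ring
  calc ∑ i, π i * (1 - π i) * (Yt i - Et) ^ 2
      ≤ ∑ i, π i * (1 - π i) * (Yt i - c) ^ 2 := key1
    _ ≤ _ := key2
    _ = _ := key3
end

section
/- Suppose treatment effects are constant, Y_i(1) = τ + Y_i(0) for all i, the SDIM is unbiased (E[τ̂] = τ, equivalently Cov₁(π_i, Y_i(0)) = 0), and both equality conditions of the variance bound hold: (i) E_π̃[(1/N₁)Y(1) + (1/N₀)Y(0)] = (1/N₁)E_π[Y(1)] + (1/N₀)E_{1−π}[Y(0)], and (ii) for every i, (π_i/(N₁/N))Y_i(1) − ((1−π_i)/(N₀/N))Y_i(0) = (π_i/(N₁/N))E_π[Y(1)] − ((1−π_i)/(N₀/N))E_{1−π}[Y(0)]. Then for every i, π_i = N₁/N or Y_i(0) = E_π̃[Y(0)]. -/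
open Finset

/-!
Unbiasedness says that `π` is uncorrelated with `Y(0)`, i.e. `∑ π Y(0) = N₁ ȳ` with `ȳ` the
population mean of `Y(0)`. Under constant effects this gives `E_π[Y(1)] = τ + ȳ` and
`E_{1-π}[Y(0)] = ȳ`. Condition (i) then reduces to `E_π̃[Y(0)] = ȳ`, and condition (ii) for unit
`i` to `(π_i/p - (1-π_i)/q) (Y_i(0) - ȳ) = 0` with `p = N₁/N`, `q = N₀/N`; since `p + q = 1` the
first factor is `(π_i - p)/(p q)`.
-/

theorem sum_sub_mul_sub_mean {ι : Type*} [Fintype ι] (w y : ι → ℝ) (a : ℝ) :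
    ∑ i, (w i - a) * (y i - (1 / (Fintype.card ι : ℝ)) * ∑ j, y j)
      = ∑ i, w i * y i - (∑ i, w i) * ((1 / (Fintype.card ι : ℝ)) * ∑ j, y j) := by
  set m := (1 / (Fintype.card ι : ℝ)) * ∑ j, y j
  have hcentered : ∑ i, (y i - m) = 0 := by
    rcases isEmpty_or_nonempty ι with _ | _
    · simp
    · rw [sum_sub_distrib, sum_const, card_univ, nsmul_eq_mul]
      simp only [m]
      field_simp
      ring
  calc ∑ i, (w i - a) * (y i - m)
      = ∑ i, w i * (y i - m) - a * ∑ i, (y i - m) := by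
        rw [mul_sum, ← sum_sub_distrib]
        exact sum_congr rfl fun i _ => by ring
    _ = ∑ i, w i * y i - (∑ i, w i) * m := by
        rw [hcentered, sum_mul, ← sum_sub_distrib]
        simp only [mul_sub, mul_zero, sub_zero]

theorem div_eq_of_sum_mul_affine_div_eq {ι : Type*} [Fintype ι] {w y : ι → ℝ} {α β τ m : ℝ}
    (hw : ∑ i, w i ≠ 0) (hαβ : α + β ≠ 0)
    (h : (∑ i, w i * (α * (τ + y i) + β * y i)) / ∑ i, w i = α * (τ + m) + β * m) :
    (∑ i, w i * y i) / ∑ i, w i = m := by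
  have hsum : ∑ i, w i * (α * (τ + y i) + β * y i)
      = α * τ * ∑ i, w i + (α + β) * ∑ i, w i * y i := by
    rw [mul_sum, mul_sum, ← sum_add_distrib]
    exact sum_congr rfl fun i _ => by ring
  rw [hsum, add_div, mul_div_assoc, div_self hw, mul_one, mul_div_assoc] at h
  exact mul_left_cancel₀ hαβ (by linarith)

theorem eq_or_eq_of_div_mul_sub_div_mul_eq {p q x y m τ : ℝ} (hp : p ≠ 0) (hq : q ≠ 0)
    (hpq : p + q = 1)
    (h : x / p * (τ + y) - (1 - x) / q * y = x / p * (τ + m) - (1 - x) / q * m) :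
    x = p ∨ y = m := by
  have hfactor : (x - p) * (y - m) = 0 := by
    field_simp at h
    linear_combination h - (x * (y - m)) * hpq
  exact (mul_eq_zero.mp hfactor).imp sub_eq_zero.mp sub_eq_zero.mp

theorem equality_conditions_imply_uniform_or_mean_general (N N1 N0 : ℕ)
    (hN1 : 0 < N1) (hN0 : 0 < N0) (hN : N1 + N0 = N)
    (Y0 Y1 π : Fin N → ℝ) (τ : ℝ)
    (hπsum : ∑ i, π i = (N1 : ℝ))
    (hπt : 0 < ∑ i, π i * (1 - π i))
    (hconst : ∀ i, Y1 i = τ + Y0 i)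
    (hcov : ∑ i, (π i - (N1 : ℝ) / (N : ℝ)) * (Y0 i - (1 / (N : ℝ)) * ∑ j, Y0 j) = 0)
    (hi : (∑ i, π i * (1 - π i) * ((1 / (N1 : ℝ)) * Y1 i + (1 / (N0 : ℝ)) * Y0 i))
            / (∑ i, π i * (1 - π i))
          = (1 / (N1 : ℝ)) * ((∑ i, π i * Y1 i) / (N1 : ℝ))
            + (1 / (N0 : ℝ)) * ((∑ i, (1 - π i) * Y0 i) / (N0 : ℝ)))
    (hii : ∀ i, π i / ((N1 : ℝ) / (N : ℝ)) * Y1 i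
              - (1 - π i) / ((N0 : ℝ) / (N : ℝ)) * Y0 i
          = π i / ((N1 : ℝ) / (N : ℝ)) * ((∑ j, π j * Y1 j) / (N1 : ℝ))
            - (1 - π i) / ((N0 : ℝ) / (N : ℝ)) * ((∑ j, (1 - π j) * Y0 j) / (N0 : ℝ))) :
    ∀ i, π i = (N1 : ℝ) / (N : ℝ)
      ∨ Y0 i = (∑ j, π j * (1 - π j) * Y0 j) / (∑ j, π j * (1 - π j)) := by
  intro i
  have hN1' : (N1 : ℝ) ≠ 0 := by positivity
  have hN0' : (N0 : ℝ) ≠ 0 := by positivity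
  have hNsum : (N1 : ℝ) + N0 = N := by exact_mod_cast hN
  have hN' : (N : ℝ) ≠ 0 := by rw [← hNsum]; positivity
  set m := (1 / (N : ℝ)) * ∑ j, Y0 j
  have hπY0 : ∑ j, π j * Y0 j = N1 * m := by
    have := sum_sub_mul_sub_mean π Y0 ((N1 : ℝ) / N)
    rw [Fintype.card_fin, hcov, hπsum] at this
    linarith
  have hmean1 : (∑ j, π j * Y1 j) / N1 = τ + m := by
    simp only [hconst, mul_add, sum_add_distrib, ← sum_mul, hπsum, hπY0]
    field_simp
  have hmean0 : (∑ j, (1 - π j) * Y0 j) / N0 = m := by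
    simp only [sub_mul, one_mul, sum_sub_distrib, hπY0]
    rw [div_eq_iff hN0', show ∑ j, Y0 j = N * m by simp only [m]; field_simp, ← hNsum]
    ring
  rw [hmean1, hmean0] at hi hii
  simp only [hconst] at hi hii
  refine (eq_or_eq_of_div_mul_sub_div_mul_eq (by positivity) (by positivity) ?_ (hii i)).imp_right
    fun hY0 => hY0.trans (div_eq_of_sum_mul_affine_div_eq hπt.ne' (by positivity) hi).symm
  rw [← add_div, hNsum, div_self hN']

/-- Under constant treatment effects, unbiasedness, and the two equality
conditions of the variance bound, each unit has π_i = N₁/N or Y_i(0) equals the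
π̃-weighted mean of Y(0). -/
theorem equality_conditions_imply_uniform_or_mean (N N1 N0 : ℕ)
    (hN1 : 0 < N1) (hN0 : 0 < N0) (hN : N1 + N0 = N)
    (Y0 Y1 π : Fin N → ℝ) (τ : ℝ)
    (hπ : ∀ i, 0 ≤ π i ∧ π i ≤ 1) (hπsum : ∑ i, π i = (N1 : ℝ))
    (hπt : 0 < ∑ i, π i * (1 - π i))
    (hconst : ∀ i, Y1 i = τ + Y0 i)
    (hcov : ∑ i, (π i - (N1 : ℝ) / (N : ℝ)) * (Y0 i - (1 / (N : ℝ)) * ∑ j, Y0 j) = 0)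
    (hi : (∑ i, π i * (1 - π i) * ((1 / (N1 : ℝ)) * Y1 i + (1 / (N0 : ℝ)) * Y0 i))
            / (∑ i, π i * (1 - π i))
          = (1 / (N1 : ℝ)) * ((∑ i, π i * Y1 i) / (N1 : ℝ))
            + (1 / (N0 : ℝ)) * ((∑ i, (1 - π i) * Y0 i) / (N0 : ℝ)))
    (hii : ∀ i, π i / ((N1 : ℝ) / (N : ℝ)) * Y1 i
              - (1 - π i) / ((N0 : ℝ) / (N : ℝ)) * Y0 i
          = π i / ((N1 : ℝ) / (N : ℝ)) * ((∑ j, π j * Y1 j) / (N1 : ℝ))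
            - (1 - π i) / ((N0 : ℝ) / (N : ℝ)) * ((∑ j, (1 - π j) * Y0 j) / (N0 : ℝ))) :
    ∀ i, π i = (N1 : ℝ) / (N : ℝ)
      ∨ Y0 i = (∑ j, π j * (1 - π j) * Y0 j) / (∑ j, π j * (1 - π j)) :=
  equality_conditions_imply_uniform_or_mean_general N N1 N0 hN1 hN0 hN Y0 Y1 π τ hπsum hπt hconst
    hcov hi hii
end

section
/- In the difference-in-differences setting, the event-study coefficient β̂_t = τ̂_t − τ̂_0 (where τ̂_t is the SDIM for period-t outcomes) has expectation E[β̂_t] = τ_t + (N/N₀)(N/N₁)·Cov₁(π_i, Y_{it}(0) − Y_{i0}(0)), where τ_t = (1/N₁)Σ_i π_i(Y_{it}(1) − Y_{it}(0)), assuming no anticipation Y_{i0}(1) = Y_{i0}(0) for all i. -/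
/-!
With a binary assignment `D`, each difference in means is an affine function of `D`, so its
expectation is obtained by replacing `D i` with `π i`. The event-study coefficient
`τ̂_t - τ̂_0` is itself the difference in means of the differenced outcomes
`Y_t(1) - Y_0(0)` and `Y_t(0) - Y_0(0)` (by no anticipation). Its expectation, rearranged
using `∑ π i = N₁` (a consequence of `∑ D i = N₁` a.s.), is `τ_t` plus the covariance term.
-/

open MeasureTheory Finset

section DiffInMeans

variable {ι : Type*} [Fintype ι]

/-- The paper's `τ̂` for the assignment `d`; `d i * y₁ i + (1 - d i) * y₀ i` is the observed outcome. -/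
noncomputable def diffInMeans (n₁ n₀ : ℝ) (d y₁ y₀ : ι → ℝ) : ℝ :=
  (1 / n₁) * ∑ i, d i * (d i * y₁ i + (1 - d i) * y₀ i)
    - (1 / n₀) * ∑ i, (1 - d i) * (d i * y₁ i + (1 - d i) * y₀ i)

theorem diffInMeans_sub_diffInMeans (n₁ n₀ : ℝ) (d y₁ y₀ y₁' y₀' : ι → ℝ) :
    diffInMeans n₁ n₀ d y₁ y₀ - diffInMeans n₁ n₀ d y₁' y₀'
      = diffInMeans n₁ n₀ d (y₁ - y₁') (y₀ - y₀') := by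
  simp only [diffInMeans, Pi.sub_apply, mul_sum, ← sum_sub_distrib]
  exact sum_congr rfl fun i _ => by ring

theorem diffInMeans_of_binary {n₁ n₀ : ℝ} {d : ι → ℝ} (hd : ∀ i, d i = 0 ∨ d i = 1)
    (y₁ y₀ : ι → ℝ) :
    diffInMeans n₁ n₀ d y₁ y₀ = (1 / n₁) * ∑ i, d i * y₁ i - (1 / n₀) * ∑ i, (1 - d i) * y₀ i := by
  unfold diffInMeans
  congr 2 <;> refine sum_congr rfl fun i _ => ?_ <;> rcases hd i with h | h <;> simp [h]

variable {Ω : Type*} [MeasurableSpace Ω] {μ : Measure Ω} [IsProbabilityMeasure μ]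

theorem integral_diffInMeans {D : ι → Ω → ℝ} {π : ι → ℝ} (hD : ∀ i ω, D i ω = 0 ∨ D i ω = 1)
    (hint : ∀ i, Integrable (D i) μ) (hE : ∀ i, ∫ ω, D i ω ∂μ = π i) (n₁ n₀ : ℝ)
    (y₁ y₀ : ι → ℝ) :
    ∫ ω, diffInMeans n₁ n₀ (fun i => D i ω) y₁ y₀ ∂μ
      = (1 / n₁) * ∑ i, π i * y₁ i - (1 / n₀) * ∑ i, (1 - π i) * y₀ i := by
  have hint₀ : ∀ i, Integrable (fun ω => (1 - D i ω) * y₀ i) μ :=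
    fun i => ((integrable_const 1).sub (hint i)).mul_const _
  have hlin : ∀ ω, diffInMeans n₁ n₀ (fun i => D i ω) y₁ y₀
      = (1 / n₁) * ∑ i, D i ω * y₁ i - (1 / n₀) * ∑ i, (1 - D i ω) * y₀ i :=
    fun ω => diffInMeans_of_binary (hD · ω) y₁ y₀
  simp only [hlin]
  rw [integral_sub ((integrable_finsetSum _ fun i _ => (hint i).mul_const _).const_mul _)
      ((integrable_finsetSum _ fun i _ => hint₀ i).const_mul _),
    integral_const_mul, integral_const_mul, integral_finsetSum _ fun i _ => (hint i).mul_const _,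
    integral_finsetSum _ fun i _ => hint₀ i]
  simp only [integral_mul_const, integral_sub (integrable_const 1) (hint _), hE, integral_const,
    probReal_univ, one_smul]

theorem sum_integral_eq_of_ae_sum_eq {D : ι → Ω → ℝ} {π : ι → ℝ} {c : ℝ}
    (hint : ∀ i, Integrable (D i) μ) (hE : ∀ i, ∫ ω, D i ω ∂μ = π i)
    (hsum : ∀ᵐ ω ∂μ, ∑ i, D i ω = c) :
    ∑ i, π i = c := by
  simp only [← hE, ← integral_finsetSum _ fun i _ => hint i, integral_congr_ae hsum,
    integral_const, probReal_univ, one_smul]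

end DiffInMeans

theorem Finset.sum_mul_sub_const_of_sum_eq_zero {ι : Type*} {s : Finset ι} {a : ι → ℝ}
    (ha : ∑ i ∈ s, a i = 0) (x : ι → ℝ) (k : ℝ) :
    ∑ i ∈ s, a i * (x i - k) = ∑ i ∈ s, a i * x i := by
  simp only [mul_sub, sum_sub_distrib, ← sum_mul, ha, zero_mul, sub_zero]

/-- Expectation of the event-study (DiD) coefficient β̂_t = τ̂_t − τ̂_0
under Poisson rejective assignment, with no anticipation. -/
theorem did_expectation {Ω : Type*} [MeasurableSpace Ω] (μ : Measure Ω)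
    [IsProbabilityMeasure μ]
    (N N1 N0 : ℕ) (hN1 : 0 < N1) (hN0 : 0 < N0) (hN : N1 + N0 = N)
    (Y0t Y1t Y00 Y10 π : Fin N → ℝ) (D : Fin N → Ω → ℝ)
    (hD01 : ∀ i ω, D i ω = 0 ∨ D i ω = 1)
    (hint : ∀ i, Integrable (D i) μ)
    (hE : ∀ i, ∫ ω, D i ω ∂μ = π i)
    (hsum : ∀ᵐ ω ∂μ, ∑ i, D i ω = (N1 : ℝ))
    (hnoanticip : ∀ i, Y10 i = Y00 i) :
    (∫ ω, (((1 / (N1 : ℝ)) * ∑ i, D i ω * (D i ω * Y1t i + (1 - D i ω) * Y0t i)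
          - (1 / (N0 : ℝ)) * ∑ i, (1 - D i ω) * (D i ω * Y1t i + (1 - D i ω) * Y0t i))
        - ((1 / (N1 : ℝ)) * ∑ i, D i ω * (D i ω * Y10 i + (1 - D i ω) * Y00 i)
          - (1 / (N0 : ℝ)) * ∑ i, (1 - D i ω) * (D i ω * Y10 i + (1 - D i ω) * Y00 i))) ∂μ)
      = (1 / (N1 : ℝ)) * ∑ i, π i * (Y1t i - Y0t i)
        + ((N : ℝ) / (N0 : ℝ)) * ((N : ℝ) / (N1 : ℝ))
          * ((1 / (N : ℝ)) * ∑ i, (π i - (N1 : ℝ) / (N : ℝ))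
              * ((Y0t i - Y00 i) - (1 / (N : ℝ)) * ∑ j, (Y0t j - Y00 j))) := by
  have hN1ne : (N1 : ℝ) ≠ 0 := by positivity
  have hN0ne : (N0 : ℝ) ≠ 0 := by positivity
  have hNcast : (N : ℝ) = N1 + N0 := by exact_mod_cast hN.symm
  have hNne : (N : ℝ) ≠ 0 := by rw [hNcast]; positivity
  have hπ : ∑ i, π i = N1 := sum_integral_eq_of_ae_sum_eq hint hE hsum
  have hcentered : ∑ i, (π i - (N1 : ℝ) / N) = 0 := by
    rw [sum_sub_distrib, hπ, sum_const, card_univ, Fintype.card_fin, nsmul_eq_mul,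
      mul_div_cancel₀ _ hNne, sub_self]
  change ∫ ω, diffInMeans N1 N0 (fun i => D i ω) Y1t Y0t
      - diffInMeans N1 N0 (fun i => D i ω) Y10 Y00 ∂μ = _
  rw [funext hnoanticip]
  simp only [diffInMeans_sub_diffInMeans]
  rw [integral_diffInMeans hD01 hint hE, sum_mul_sub_const_of_sum_eq_zero hcentered]
  simp only [Pi.sub_apply, mul_sub, sub_mul, one_mul, sum_sub_distrib, ← mul_sum]
  rw [hNcast]
  field_simp
  ring
end

section
/- If π_iᶻ = N₁ᶻ/N for all i and 𝒞 is nonempty, then the 2SLS estimand equals the canonical LATE: β_2SLS = (1/|𝒞|)Σ_{i∈𝒞}(Y_i(1) − Y_i(0)). -/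
open Finset

/-- With constant instrument probabilities π_i^Z = N₁^Z/N and a nonempty
set of compliers, the 2SLS estimand equals the canonical LATE. -/
theorem two_sls_canonical_late (N N1Z N0Z : ℕ) (hN1 : 0 < N1Z) (hN0 : 0 < N0Z)
    (hN : N1Z + N0Z = N)
    (Y0 Y1 D0 D1 πZ : Fin N → ℝ)
    (hD0 : ∀ i, D0 i = 0 ∨ D0 i = 1) (hD1 : ∀ i, D1 i = 0 ∨ D1 i = 1)
    (hmono : ∀ i, D0 i ≤ D1 i)
    (hπconst : ∀ i, πZ i = (N1Z : ℝ) / (N : ℝ))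
    (hCne : (Finset.univ.filter (fun i => D0 i < D1 i)).Nonempty) :
    ((1 / (N : ℝ)) * ∑ i ∈ Finset.univ.filter (fun i => D0 i < D1 i),
        πZ i * (Y1 i - Y0 i)
      + ((N : ℝ) / (N1Z : ℝ)) * ((N : ℝ) / (N0Z : ℝ))
        * ((1 / (N : ℝ)) * ∑ i, (πZ i - (N1Z : ℝ) / (N : ℝ))
            * (D0 i * Y1 i + (1 - D0 i) * Y0 i)))
    / ((1 / (N : ℝ)) * ∑ i ∈ Finset.univ.filter (fun i => D0 i < D1 i), πZ i
      + ((N : ℝ) / (N1Z : ℝ)) * ((N : ℝ) / (N0Z : ℝ))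
        * ((1 / (N : ℝ)) * ∑ i, (πZ i - (N1Z : ℝ) / (N : ℝ)) * D0 i))
    = (1 / ((Finset.univ.filter (fun i => D0 i < D1 i)).card : ℝ))
      * ∑ i ∈ Finset.univ.filter (fun i => D0 i < D1 i), (Y1 i - Y0 i) := by
  have hNpos : 0 < N := by omega
  have hNne : (N : ℝ) ≠ 0 := by positivity
  have hcne : ((N1Z : ℝ) / N) ≠ 0 := by
    apply div_ne_zero _ hNne
    exact_mod_cast hN1.ne'
  set C := Finset.univ.filter (fun i => D0 i < D1 i) with hC
  have hcard : (C.card : ℝ) ≠ 0 := by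
    have := hCne.card_pos
    exact_mod_cast this.ne'
  have hz : ∀ i, πZ i - (N1Z : ℝ) / N = 0 := by
    intro i; rw [hπconst i]; ring
  have h1 : ∑ i, (πZ i - (N1Z : ℝ) / N) * (D0 i * Y1 i + (1 - D0 i) * Y0 i) = 0 := by
    apply Finset.sum_eq_zero; intro i _; rw [hz i]; ring
  have h2 : ∑ i, (πZ i - (N1Z : ℝ) / N) * D0 i = 0 := by
    apply Finset.sum_eq_zero; intro i _; rw [hz i]; ring
  have h3 : ∑ i ∈ C, πZ i * (Y1 i - Y0 i)
      = ((N1Z : ℝ) / N) * ∑ i ∈ C, (Y1 i - Y0 i) := by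
    rw [Finset.mul_sum]; exact Finset.sum_congr rfl fun i _ => by rw [hπconst i]
  have h4 : ∑ i ∈ C, πZ i = ((N1Z : ℝ) / N) * C.card := by
    rw [Finset.sum_congr rfl fun i _ => hπconst i, Finset.sum_const, nsmul_eq_mul, mul_comm]
  rw [h1, h2, h3, h4]
  simp only [mul_zero, add_zero]
  field_simp
end
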